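/- Same-token cancellation: for every token t, rationals lo ≤ hi, and dimension tag d, the expression Sub (Meas t lo hi d) (Meas t lo hi d) is interchangeable with Exact 0 d. -/

import Mathlib

abbrev Token := ℕ

inductive Dim where
  | base
deriving DecidableEq

inductive Expr where
  | Exact (q : ℚ) (d : Dim)
  | Meas (t : Token) (lo hi : ℚ) (d : Dim)
  | Add (a b : Expr)
  | Sub (a b : Expr)
  | Mul (a b : Expr)
  | Div (a b : Expr)
  | Neg (a : Expr)

abbrev TokenEnv := Token → ℚ

def TokenConsistent (σ : TokenEnv) : Expr → Prop
  | .Exact _ _ => True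
  | .Meas t lo hi _ => lo ≤ σ t ∧ σ t ≤ hi
  | .Add a b => TokenConsistent σ a ∧ TokenConsistent σ b
  | .Sub a b => TokenConsistent σ a ∧ TokenConsistent σ b
  | .Mul a b => TokenConsistent σ a ∧ TokenConsistent σ b
  | .Div a b => TokenConsistent σ a ∧ TokenConsistent σ b
  | .Neg a => TokenConsistent σ a

def eval (σ : TokenEnv) : Expr → ℚ
  | .Exact q _ => q
  | .Meas t _ _ _ => σ t
  | .Add a b => eval σ a + eval σ b
  | .Sub a b => eval σ a - eval σ b
  | .Mul a b => eval σ a * eval σ b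
  | .Div a b => eval σ a / eval σ b
  | .Neg a => - eval σ a

def Encl (e : Expr) : Set ℚ := {v : ℚ | ∃ σ : TokenEnv, TokenConsistent σ e ∧ eval σ e = v}

def RewritesTo (e e' : Expr) : Prop := Encl e' ⊆ Encl e

def Interchangeable (e e' : Expr) : Prop := Encl e = Encl e'

def OneWayOnly (e e' : Expr) : Prop := RewritesTo e e' ∧ ¬ RewritesTo e' e

theorem Encl_exact (q : ℚ) (d : Dim) : Encl (.Exact q d) = {q} := by
  ext v
  exact ⟨fun ⟨_, _, hv⟩ => hv.symm, fun hv => ⟨fun _ => 0, trivial, hv.symm⟩⟩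

theorem Encl_meas (t : Token) (lo hi : ℚ) (d : Dim) : Encl (.Meas t lo hi d) = Set.Icc lo hi := by
  ext v
  constructor
  · rintro ⟨σ, hσ, rfl⟩
    exact hσ
  · intro hv
    exact ⟨fun _ => v, hv, rfl⟩

theorem Encl_sub_self {e : Expr} (he : (Encl e).Nonempty) : Encl (.Sub e e) = {0} := by
  ext v
  constructor
  · rintro ⟨σ, -, rfl⟩
    exact sub_self (eval σ e)
  · rintro rfl
    obtain ⟨_, σ, hσ, -⟩ := he
    exact ⟨σ, ⟨hσ, hσ⟩, sub_self (eval σ e)⟩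

theorem same_token_subtraction_interchangeable_exact_zero
    (t : Token) (lo hi : ℚ) (hle : lo ≤ hi) (d : Dim) :
    Interchangeable (.Sub (.Meas t lo hi d) (.Meas t lo hi d)) (.Exact 0 d) := by
  have hne : (Encl (.Meas t lo hi d)).Nonempty := by
    rwa [Encl_meas, Set.nonempty_Icc]
  rw [Interchangeable, Encl_sub_self hne, Encl_exact]
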